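/- arXiv:math/0506415 — 4 statements merged into one kernel-verified Lean document; each statement's English description precedes it below -/
import Mathlib

section
/- The alternating series 1 − 1/3³ + 1/5³ − 1/7³ + ... equals π³/32. -/
open Real
theorem alt_odd_cubes : ∑' k : ℕ, (-1 : ℝ) ^ k / (2 * k + 1) ^ 3 = π ^ 3 / 32 := by
  have h := hasSum_L_function_mod_four_eval_three
  have hinj : Function.Injective (fun k : ℕ => 2 * k + 1) := by
    intro a b hab; simp only at hab; omega
  have h2 : HasSum (fun k : ℕ => (-1 : ℝ) ^ k / (2 * k + 1) ^ 3) (π ^ 3 / 32) := by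
    rw [show (fun k : ℕ => (-1 : ℝ) ^ k / (2 * k + 1) ^ 3)
        = (fun n : ℕ => (1 : ℝ) / (n : ℝ) ^ 3 * Real.sin (π * n / 2)) ∘ (fun k => 2 * k + 1) from ?_]
    · rw [Function.Injective.hasSum_iff hinj]
      · exact h
      · intro n hn
        simp only [Set.mem_range, not_exists] at hn
        obtain ⟨m, rfl⟩ : ∃ m, n = 2 * m := by
          rcases Nat.even_or_odd n with ⟨m, hm⟩ | ⟨m, hm⟩
          · exact ⟨m, by omega⟩
          · exact absurd hm.symm (hn m)
        have : Real.sin (π * (2 * m : ℕ) / 2) = 0 := by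
          rw [show π * ((2 * m : ℕ) : ℝ) / 2 = m * π by push_cast; ring, Real.sin_nat_mul_pi]
        push_cast at this
        simp [this]
    · funext k
      have hs : Real.sin (π * (2 * k + 1 : ℕ) / 2) = (-1 : ℝ) ^ k := by
        rw [show π * ((2 * k + 1 : ℕ) : ℝ) / 2 = π / 2 + k * π by push_cast; ring,
          Real.sin_add_nat_mul_pi]
        simp
      simp only [Function.comp_apply, hs]
      push_cast
      ring
  exact h2.tsum_eq
end

section
/- The alternating series 1 − 1/3⁵ + 1/5⁵ − 1/7⁵ + ... equals 5π⁵/1536. -/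
open Real

theorem alt_odd_fifth : ∑' k : ℕ, (-1 : ℝ) ^ k / (2 * k + 1) ^ 5 = 5 * π ^ 5 / 1536 := by
  have H := hasSum_one_div_nat_pow_mul_sin (k := 2) two_ne_zero
    (x := 1/4) ⟨by norm_num, by norm_num⟩
  have h5' : bernoulli' 5 = 0 := by
    rw [bernoulli'_def]
    norm_num [Finset.sum_range_succ, Nat.choose]
  have hb5 : bernoulli 5 = 0 := by
    rw [bernoulli_eq_bernoulli'_of_ne_one (by norm_num), h5']
  have hb : (Polynomial.map (algebraMap ℚ ℝ) (Polynomial.bernoulli 5)).eval (1/4 : ℝ)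
      = -25/1024 := by
    simp only [Polynomial.bernoulli, Finset.sum_range_succ, Finset.sum_range_zero,
      Polynomial.map_add, Polynomial.map_smul, Polynomial.map_monomial, Polynomial.map_zero,
      Polynomial.eval_add, Polynomial.eval_smul, Polynomial.eval_monomial, Polynomial.eval_zero]
    rw [bernoulli_eq_bernoulli'_of_ne_one (by norm_num : (2:ℕ) ≠ 1),
      bernoulli_eq_bernoulli'_of_ne_one (by norm_num : (3:ℕ) ≠ 1),
      bernoulli_eq_bernoulli'_of_ne_one (by norm_num : (4:ℕ) ≠ 1), hb5]
    norm_num [bernoulli_one, bernoulli_zero, Nat.choose, smul_eq_mul]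
  have hinj : Function.Injective (fun k : ℕ => 2 * k + 1) := by
    intro a b h; simp only at h; omega
  have hv : ∀ n ∉ Set.range (fun k : ℕ => 2 * k + 1),
      (1 / (n : ℝ) ^ (2 * 2 + 1) * Real.sin (2 * π * n * (1/4))) = 0 := by
    intro n hn
    obtain ⟨m, rfl⟩ : ∃ m, n = 2 * m := by
      rcases Nat.even_or_odd n with ⟨m, hm⟩ | ⟨m, hm⟩
      · exact ⟨m, by omega⟩
      · exact absurd ⟨m, by simp; omega⟩ hn
    have : 2 * π * ((2 * m : ℕ) : ℝ) * (1/4) = m * π := by push_cast; ring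
    rw [this, Real.sin_nat_mul_pi, mul_zero]
  have H2 := (hinj.hasSum_iff hv).mpr H
  have H3 : HasSum (fun k : ℕ => (-1 : ℝ) ^ k / (2 * k + 1) ^ 5)
      ((-1 : ℝ) ^ (2 + 1) * (2 * π) ^ (2 * 2 + 1) / 2 / (Nat.factorial (2 * 2 + 1)) *
        (Polynomial.map (algebraMap ℚ ℝ) (Polynomial.bernoulli (2 * 2 + 1))).eval (1/4)) := by
    refine H2.congr_fun fun k => ?_
    show (-1 : ℝ) ^ k / (2 * k + 1) ^ 5 =
      1 / ((2 * k + 1 : ℕ) : ℝ) ^ (2 * 2 + 1) * Real.sin (2 * π * ((2 * k + 1 : ℕ) : ℝ) * (1/4))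
    have h1 : 2 * π * ((2 * k + 1 : ℕ) : ℝ) * (1/4) = k * π + π / 2 := by push_cast; ring
    rw [h1, Real.sin_add, Real.sin_nat_mul_pi, Real.cos_pi_div_two, Real.sin_pi_div_two]
    have h2 : Real.cos (k * π) = (-1) ^ k := by
      simpa using Real.cos_nat_mul_pi_sub 0 k
    rw [h2]
    push_cast
    ring
  rw [H3.tsum_eq]
  have : (5 : ℕ).factorial = 120 := by decide
  norm_num [hb, this]
  ring
end

section
/- The series 1 + 1/3⁶ + 1/5⁶ + 1/7⁶ + ... equals π⁶/960. -/
open Real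
theorem hasSum_zeta_six : HasSum (fun n : ℕ => (1 : ℝ) / (n : ℝ) ^ 6) (π ^ 6 / 945) := by
  convert hasSum_zeta_nat (by norm_num : (3:ℕ) ≠ 0) using 1
  norm_num
  have h5 : bernoulli' 5 = 0 := bernoulli'_eq_zero_of_odd ⟨2, rfl⟩ (by norm_num)
  have hb : bernoulli 6 = 1/42 := by
    rw [bernoulli_eq_bernoulli'_of_ne_one (by norm_num), bernoulli'_def]
    simp [Finset.sum_range_succ, bernoulli'_zero, bernoulli'_one, bernoulli'_two,
      bernoulli'_three, bernoulli'_four, h5, Nat.choose]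
    norm_num
  rw [hb]
  norm_num [Nat.factorial]
  ring

theorem odd_sixth : ∑' k : ℕ, (1 : ℝ) / (2 * k + 1) ^ 6 = π ^ 6 / 960 := by
  have h6 := hasSum_zeta_six
  have heven : HasSum (fun k : ℕ => (1:ℝ) / ((2 * k : ℕ) : ℝ) ^ 6) (π ^ 6 / 945 / 64) := by
    have hfe : (fun k : ℕ => (1:ℝ) / ((2 * k : ℕ) : ℝ) ^ 6)
        = fun k : ℕ => ((1:ℝ) / (k : ℝ) ^ 6) / 64 := by
      funext k; push_cast; rcases Nat.eq_zero_or_pos k with rfl | hk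
      · norm_num
      · field_simp; ring
    rw [hfe]
    exact h6.div_const 64
  have hsub : Summable (fun k : ℕ => (1:ℝ) / ((2 * k + 1 : ℕ) : ℝ) ^ 6) :=
    h6.summable.comp_injective fun a b h => by omega
  have hkey := (HasSum.even_add_odd (f := fun n : ℕ => (1:ℝ)/(n:ℝ)^6) heven hsub.hasSum).unique h6
  rw [hsub.hasSum.tsum_eq] at hkey
  have hcast : ∑' k : ℕ, (1 : ℝ) / (2 * k + 1) ^ 6
      = ∑' k : ℕ, (1:ℝ) / ((2 * k + 1 : ℕ) : ℝ) ^ 6 := by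
    congr 1; funext k; push_cast; ring
  rw [hcast]
  linarith [hkey]
end

section
/- The alternating series 1 − 1/3⁷ + 1/5⁷ − 1/7⁷ + ... equals 61π⁷/184320. -/
open Real

lemma bernoulli'_five : bernoulli' 5 = 0 :=
  bernoulli'_eq_zero_of_odd (by decide) (by norm_num)

lemma bernoulli'_six : bernoulli' 6 = 1 / 42 := by
  have h1 : Nat.choose 6 2 = 15 := by decide
  have h2 : Nat.choose 6 3 = 20 := by decide
  have h3 : Nat.choose 6 4 = 15 := by decide
  rw [bernoulli'_def]
  norm_num [Finset.sum_range_succ, Finset.sum_range_zero, h1, h2, h3,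
    bernoulli'_five]

lemma bernoulli_seven_eval_one_quarter :
    (Polynomial.bernoulli 7).eval (1 / 4) = 427 / 16384 := by
  simp_rw [Polynomial.bernoulli, Finset.sum_range_succ, Polynomial.eval_add,
    Polynomial.eval_monomial]
  rw [Finset.sum_range_zero, Polynomial.eval_zero, zero_add, bernoulli_one]
  rw [bernoulli_eq_bernoulli'_of_ne_one (by decide : (0:ℕ) ≠ 1), bernoulli'_zero,
    bernoulli_eq_bernoulli'_of_ne_one (by decide : (2:ℕ) ≠ 1), bernoulli'_two,
    bernoulli_eq_bernoulli'_of_ne_one (by decide : (3:ℕ) ≠ 1), bernoulli'_three,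
    bernoulli_eq_bernoulli'_of_ne_one (by decide : (4:ℕ) ≠ 1), bernoulli'_four,
    bernoulli_eq_bernoulli'_of_ne_one (by decide : (5:ℕ) ≠ 1), bernoulli'_five,
    bernoulli_eq_bernoulli'_of_ne_one (by decide : (6:ℕ) ≠ 1), bernoulli'_six,
    bernoulli_eq_bernoulli'_of_ne_one (by decide : (7:ℕ) ≠ 1),
    bernoulli'_eq_zero_of_odd (by decide) (by norm_num : (1:ℕ) < 7)]
  norm_num [Nat.choose]

lemma hasSum_L7 :
    HasSum (fun n : ℕ => (1 : ℝ) / (n : ℝ) ^ 7 * Real.sin (π * n / 2))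
      (61 * π ^ 7 / 184320) := by
  apply (congr_arg₂ HasSum ?_ ?_).to_iff.mp <|
    hasSum_one_div_nat_pow_mul_sin (k := 3) three_ne_zero (?_ : 1 / 4 ∈ Set.Icc (0 : ℝ) 1)
  · ext1 n
    norm_num
    left
    congr 1
    ring
  · have : (1 / 4 : ℝ) = (algebraMap ℚ ℝ) (1 / 4 : ℚ) := by norm_num
    rw [this, mul_pow, Polynomial.eval_map, Polynomial.eval₂_at_apply,
      (by decide : 2 * 3 + 1 = 7), bernoulli_seven_eval_one_quarter]
    norm_num [Nat.factorial]
    field_simp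
    ring
  · rw [Set.mem_Icc]
    constructor <;> norm_num

theorem alt_odd_seventh : ∑' k : ℕ, (-1 : ℝ) ^ k / (2 * k + 1) ^ 7 = 61 * π ^ 7 / 184320 := by
  have hinj : Function.Injective (fun k : ℕ => 2 * k + 1) := by
    intro a b h
    simpa using h
  have h0 : HasSum ((fun n : ℕ => (1 : ℝ) / (n : ℝ) ^ 7 * Real.sin (π * n / 2)) ∘
      (fun k : ℕ => 2 * k + 1)) (61 * π ^ 7 / 184320) := by
    refine (Function.Injective.hasSum_iff hinj ?_).mpr hasSum_L7
    intro n hn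
    obtain ⟨m, hm⟩ : ∃ m, n = 2 * m := by
      rcases Nat.even_or_odd n with ⟨m, hm⟩ | ⟨m, hm⟩
      · exact ⟨m, by omega⟩
      · exact absurd ⟨m, by show 2 * m + 1 = n; omega⟩ hn
    simp only [hm]
    have : π * ((2 * m : ℕ) : ℝ) / 2 = (m : ℝ) * π := by push_cast; ring
    rw [this, Real.sin_nat_mul_pi, mul_zero]
  have hsum : HasSum (fun k : ℕ => (-1 : ℝ) ^ k / (2 * k + 1) ^ 7)
      (61 * π ^ 7 / 184320) := by
    convert h0 using 1
    funext k
    simp only [Function.comp_apply]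
    have h1 : π * ((2 * k + 1 : ℕ) : ℝ) / 2 = (k : ℝ) * π + π / 2 := by push_cast; ring
    have h2 : Real.sin ((k : ℝ) * π + π / 2) = (-1 : ℝ) ^ k := by
      rw [Real.sin_add, Real.sin_nat_mul_pi, Real.cos_pi_div_two, Real.sin_pi_div_two]
      have := Real.cos_nat_mul_pi_sub 0 k
      simp at this
      simp [this]
    rw [h1, h2]
    push_cast
    ring
  exact hsum.tsum_eq
end
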